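/- For all nonempty subsets v ⊆ u ⊆ {1,…,s}, t*_v ≤ t*_u + |u| − |v|. -/

import Mathlib

open Finset

noncomputable section

/-- The bit vector `i⃗ ∈ F₂^m` of the integer `i = Σ_{ℓ=1}^m i_ℓ 2^{ℓ-1}`. -/
def bvec (m : ℕ) (i : ℕ) : Fin m → ZMod 2 :=
  fun ℓ => if Nat.testBit i ℓ.1 then 1 else 0

/-- The `(r+1)`-st row (i.e. `r` with 0-indexing) of an `m × m` matrix over `F₂`,
as a vector in `F₂^m`; junk value `0` if `r ≥ m` (never used under the hypotheses below). -/
def rowAt (m : ℕ) (A : Matrix (Fin m) (Fin m) (ZMod 2)) (r : ℕ) : Fin m → ZMod 2 :=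
  fun ℓ => if h : r < m then A ⟨r, h⟩ ℓ else 0

/-- The stacked matrix `C_{u,k}`: for each `j ∈ u`, the first `k j` rows of `C j`. -/
def stack {m s : ℕ} (C : Fin s → Matrix (Fin m) (Fin m) (ZMod 2))
    (u : Finset (Fin s)) (k : Fin s → ℕ) :
    Matrix ((j : {x // x ∈ u}) × Fin (k j.1)) (Fin m) (ZMod 2) :=
  fun p => rowAt m (C p.1.1) p.2.1

/-- `∇C_{u,k}`: the matrix whose rows are the `(k j + 1)`-st rows (1-indexed) of `C j`, `j ∈ u`. -/
def grad {m s : ℕ} (C : Fin s → Matrix (Fin m) (Fin m) (ZMod 2))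
    (u : Finset (Fin s)) (k : Fin s → ℕ) :
    Matrix {x // x ∈ u} (Fin m) (ZMod 2) :=
  fun j => rowAt m (C j.1) (k j.1)

/-- The coordinate `x_{ij} ∈ [0,1)` of the digital net generated by `C₁,…,C_s`:
`x_{ij} = Σ_{ℓ=1}^m y_ℓ 2^{-ℓ}` where `y = C_j · i⃗` over `F₂`. -/
def pt {m s : ℕ} (C : Fin s → Matrix (Fin m) (Fin m) (ZMod 2)) (i : ℕ) (j : Fin s) : ℝ :=
  ∑ ℓ : Fin m, (((C j).mulVec (bvec m i) ℓ).val : ℝ) / 2 ^ (ℓ.1 + 1)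

/-- The factor `N`: with `M(x,x') = max{k ∈ ℕ₀ : ⌊2^k x⌋ = ⌊2^k x'⌋}` (the number of matching
leading binary digits), `Nf x x' c` equals `1` if `M(x,x') > c` (equivalently the first `c+1`
binary digits match), `-1` if `M(x,x') = c` (the first `c` digits match but not `c+1`), and
`0` if `M(x,x') < c`. -/
def Nf (x x' : ℝ) (c : ℕ) : ℤ :=
  if ⌊(2:ℝ) ^ (c + 1) * x⌋ = ⌊(2:ℝ) ^ (c + 1) * x'⌋ then 1
  else if ⌊(2:ℝ) ^ c * x⌋ = ⌊(2:ℝ) ^ c * x'⌋ then -1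
  else 0

/-- The gain coefficient `Γ_{u,k} = 2^{-m} Σ_{i=0}^{2^m-1} Σ_{i'=0}^{2^m-1} ∏_{j∈u} N_{i,i',j}`. -/
def Gam {m s : ℕ} (C : Fin s → Matrix (Fin m) (Fin m) (ZMod 2))
    (u : Finset (Fin s)) (k : Fin s → ℕ) : ℚ :=
  (2 ^ m : ℚ)⁻¹ * ∑ i ∈ Finset.range (2 ^ m), ∑ i' ∈ Finset.range (2 ^ m),
      ∏ j ∈ u, (Nf (pt C i j) (pt C i' j) (k j) : ℚ)

/-- `t*_u = m + 1 - min{|k| : 1 ≤ k_j ≤ m for all j ∈ u, C_{u,k} not of full row rank}`,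
with the convention that the minimum over the empty set is `m+1`. -/
def tStar {m s : ℕ} (C : Fin s → Matrix (Fin m) (Fin m) (ZMod 2))
    (u : Finset (Fin s)) : ℕ :=
  m + 1 - sInf ({K : ℕ | ∃ k : Fin s → ℕ, (∀ j ∈ u, 1 ≤ k j ∧ k j ≤ m) ∧
      K = ∑ j ∈ u, k j ∧ (stack C u k).rank ≠ ∑ j ∈ u, k j} ∪ {m + 1})

/-! Extending a rank-deficient choice `k` on `v` by `k j = 1` for `j ∈ u \ v` adds `|u| - |v|` rows
to the stacked matrix, so the rank grows by at most `|u| - |v|` while the number of rows grows by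
exactly that much: the extension is still rank-deficient. Hence the minimum defining `t*_u` is at
most the one defining `t*_v` plus `|u| - |v|`. -/

section Stack

variable {m s : ℕ} (C : Fin s → Matrix (Fin m) (Fin m) (ZMod 2))

lemma range_stack (u : Finset (Fin s)) (k : Fin s → ℕ) :
    Set.range (stack C u k).row = {x | ∃ j ∈ u, ∃ r < k j, rowAt m (C j) r = x} := by
  ext x
  constructor
  · rintro ⟨⟨⟨j, hj⟩, r⟩, rfl⟩
    exact ⟨j, hj, r, r.2, rfl⟩
  · rintro ⟨j, hj, r, hr, rfl⟩
    exact ⟨⟨⟨j, hj⟩, ⟨r, hr⟩⟩, rfl⟩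

lemma rank_stack_eq_finrank_span (u : Finset (Fin s)) (k : Fin s → ℕ) :
    (stack C u k).rank = Module.finrank (ZMod 2)
      (Submodule.span (ZMod 2) {x | ∃ j ∈ u, ∃ r < k j, rowAt m (C j) r = x}) := by
  rw [Matrix.rank_eq_finrank_span_row, range_stack]

lemma rank_stack_congr {u : Finset (Fin s)} {k k' : Fin s → ℕ} (h : ∀ j ∈ u, k j = k' j) :
    (stack C u k).rank = (stack C u k').rank := by
  have hrows : {x | ∃ j ∈ u, ∃ r < k j, rowAt m (C j) r = x} =
      {x | ∃ j ∈ u, ∃ r < k' j, rowAt m (C j) r = x} :=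
    Set.ext fun x => exists_congr fun j => and_congr_right fun hj => by rw [h j hj]
  rw [rank_stack_eq_finrank_span, rank_stack_eq_finrank_span, hrows]

lemma rank_stack_le_sum (u : Finset (Fin s)) (k : Fin s → ℕ) :
    (stack C u k).rank ≤ ∑ j ∈ u, k j :=
  calc (stack C u k).rank ≤ Fintype.card ((j : {x // x ∈ u}) × Fin (k j.1)) :=
        Matrix.rank_le_card_height _
    _ = ∑ j ∈ u, k j := by simp [sum_attach u k]

lemma rank_stack_le_add_sum_sdiff (u v : Finset (Fin s)) (k : Fin s → ℕ) :
    (stack C u k).rank ≤ (stack C v k).rank + ∑ j ∈ u \ v, k j := by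
  have hrows : {x | ∃ j ∈ u, ∃ r < k j, rowAt m (C j) r = x} ⊆
      {x | ∃ j ∈ v, ∃ r < k j, rowAt m (C j) r = x} ∪
        {x | ∃ j ∈ u \ v, ∃ r < k j, rowAt m (C j) r = x} := by
    rintro x ⟨j, hj, r, hr, rfl⟩
    by_cases hjv : j ∈ v
    · exact Or.inl ⟨j, hjv, r, hr, rfl⟩
    · exact Or.inr ⟨j, mem_sdiff.mpr ⟨hj, hjv⟩, r, hr, rfl⟩
  calc (stack C u k).rank
      ≤ Module.finrank (ZMod 2) (Submodule.span (ZMod 2)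
          ({x | ∃ j ∈ v, ∃ r < k j, rowAt m (C j) r = x} ∪
            {x | ∃ j ∈ u \ v, ∃ r < k j, rowAt m (C j) r = x})) := by
        rw [rank_stack_eq_finrank_span]
        exact Submodule.finrank_mono (Submodule.span_mono hrows)
    _ ≤ (stack C v k).rank + (stack C (u \ v) k).rank := by
        rw [Submodule.span_union, rank_stack_eq_finrank_span, rank_stack_eq_finrank_span]
        exact Submodule.finrank_add_le_finrank_add_finrank _ _
    _ ≤ (stack C v k).rank + ∑ j ∈ u \ v, k j := by
        gcongr
        exact rank_stack_le_sum C _ k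

def deficientSums (u : Finset (Fin s)) : Set ℕ :=
  {K : ℕ | ∃ k : Fin s → ℕ, (∀ j ∈ u, 1 ≤ k j ∧ k j ≤ m) ∧
      K = ∑ j ∈ u, k j ∧ (stack C u k).rank ≠ ∑ j ∈ u, k j}

lemma tStar_eq (u : Finset (Fin s)) :
    tStar C u = m + 1 - sInf (deficientSums C u ∪ {m + 1}) :=
  rfl

lemma add_card_sdiff_mem_deficientSums (hm : 1 ≤ m) {u v : Finset (Fin s)} (hvu : v ⊆ u)
    {K : ℕ} (hK : K ∈ deficientSums C v) : K + (u \ v).card ∈ deficientSums C u := by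
  obtain ⟨k, hk, rfl, hdef⟩ := hK
  set k' : Fin s → ℕ := fun j => if j ∈ v then k j else 1
  have hk'v : ∀ j ∈ v, k j = k' j := fun j hj => by simp [k', hj]
  have hones : ∑ j ∈ u \ v, k' j = (u \ v).card := by
    rw [card_eq_sum_ones]
    exact sum_congr rfl fun j hj => by simp [k', (mem_sdiff.mp hj).2]
  have hsum : ∑ j ∈ u, k' j = ∑ j ∈ v, k j + (u \ v).card := by
    rw [← sum_sdiff hvu, add_comm, sum_congr rfl hk'v, hones]
  have hlt : (stack C v k).rank < ∑ j ∈ v, k j :=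
    lt_of_le_of_ne (rank_stack_le_sum C v k) hdef
  have hrank : (stack C u k').rank ≤ (stack C v k).rank + (u \ v).card := by
    rw [rank_stack_congr C hk'v, ← hones]
    exact rank_stack_le_add_sum_sdiff C u v k'
  refine ⟨k', fun j hj => ?_, hsum.symm, by omega⟩
  by_cases hjv : j ∈ v
  · simpa [k', hjv] using hk j hjv
  · simp [k', hjv, hm]

end Stack

theorem statement_general (m s : ℕ) (hm : 1 ≤ m)
    (C : Fin s → Matrix (Fin m) (Fin m) (ZMod 2))
    (u v : Finset (Fin s)) (hvu : v ⊆ u) :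
    tStar C v ≤ tStar C u + u.card - v.card := by
  have hmin : sInf (deficientSums C u ∪ {m + 1}) ≤
      sInf (deficientSums C v ∪ {m + 1}) + (u \ v).card := by
    rcases Nat.sInf_mem (s := deficientSums C v ∪ {m + 1}) ⟨m + 1, Or.inr rfl⟩ with h | h
    · exact Nat.sInf_le (Or.inl (add_card_sdiff_mem_deficientSums C hm hvu h))
    · rw [Set.mem_singleton_iff.mp h]
      exact (Nat.sInf_le (Or.inr rfl)).trans (Nat.le_add_right _ _)
  have hv_le : sInf (deficientSums C v ∪ {m + 1}) ≤ m + 1 := Nat.sInf_le (Or.inr rfl)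
  have hcard : (u \ v).card = u.card - v.card := card_sdiff_of_subset hvu
  have hvu_card : v.card ≤ u.card := card_le_card hvu
  rw [tStar_eq, tStar_eq]
  omega

theorem statement (m s : ℕ) (hm : 1 ≤ m) (hs : 1 ≤ s)
    (C : Fin s → Matrix (Fin m) (Fin m) (ZMod 2))
    (u v : Finset (Fin s)) (hu : u.Nonempty) (hv : v.Nonempty) (hvu : v ⊆ u) :
    tStar C v ≤ tStar C u + u.card - v.card :=
  statement_general m s hm C u v hvu

end
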